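/- Let p₁ be a pmf on X₁×Y₁ and p₂ a pmf on X₂×Y₂ (all sets finite), and let P be the pmf on (X₁×X₂)×(Y₁×Y₂) given by P((x₁,x₂),(y₁,y₂)) = p₁(x₁,y₁)·p₂(x₂,y₂). Then for every α ∈ (0,1) ∪ (1,∞], J_α(P) = J_α(p₁) + J_α(p₂). -/

import Mathlib

/-!
Relabelling the pair space `((X₁ × X₂) × (Y₁ × Y₂))²` as `(X₁ × Y₁)² × (X₂ × Y₂)²` turns both
distributions defining `J_α(P)` into products of those defining `J_α(p₁)` and `J_α(p₂)`. Rényi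
divergence is additive on product distributions: the support of a product is the product of the
supports, the sum `Σ p^α q^{1-α}` and the maximal ratio `p/q` are multiplicative, and the logarithm
turns products into sums.
-/

/-- A probability mass function on a finite set `S`. -/
def IsPMF {S : Type*} [Fintype S] (p : S → ℝ) : Prop :=
  (∀ s, 0 ≤ p s) ∧ ∑ s, p s = 1

open Classical in
/-- Rényi divergence of order `α ∈ (0,1) ∪ (1,∞]` between finitely supported
distributions, with values in `(-∞,∞]`:
`D_α(p‖q) = (α−1)⁻¹ · log Σ_{s : p(s)>0} p(s)^α q(s)^{1−α}` for finite `α`, equal to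
`+∞` if `α > 1` and `supp p ⊄ supp q`, and
`D_∞(p‖q) = log max_{s : p(s)>0} p(s)/q(s)`, equal to `+∞` if `supp p ⊄ supp q`. -/
noncomputable def renyiD {S : Type*} [Fintype S] (α : ENNReal) (p q : S → ℝ) : EReal :=
  if α = ⊤ then
    (if ∀ s, 0 < p s → 0 < q s then
      ((Real.log (sSup { r : ℝ | ∃ s, 0 < p s ∧ r = p s / q s }) : ℝ) : EReal)
    else ⊤)
  else if 1 < α ∧ ¬ ∀ s, 0 < p s → 0 < q s then ⊤
  else (((α.toReal - 1)⁻¹ *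
      Real.log (∑ s ∈ Finset.univ.filter (fun s => 0 < p s),
        p s ^ α.toReal * q s ^ (1 - α.toReal)) : ℝ) : EReal)

/-- The correlation measure `J_α(p) = D_α(q‖r)` where
`q((x₁,y₁),(x₂,y₂)) = p(x₁,y₁)·p(x₂,y₂)` and
`r((x₁,y₁),(x₂,y₂)) = p(x₁,y₂)·p(x₂,y₁)`. -/
noncomputable def Jalpha {X Y : Type*} [Fintype X] [Fintype Y] (α : ENNReal)
    (p : X × Y → ℝ) : EReal :=
  renyiD α (fun t : (X × Y) × (X × Y) => p t.1 * p t.2)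
    (fun t : (X × Y) × (X × Y) => p (t.1.1, t.2.2) * p (t.2.1, t.1.2))

open Finset Pointwise

lemma mul_pos_iff_of_nonneg {R : Type*} [MulZeroClass R] [PartialOrder R] [PosMulStrictMono R]
    {a b : R} (ha : 0 ≤ a) (hb : 0 ≤ b) :
    0 < a * b ↔ 0 < a ∧ 0 < b :=
  ⟨fun h => ⟨lt_of_le_of_ne ha (by rintro rfl; simp at h),
    lt_of_le_of_ne hb (by rintro rfl; simp at h)⟩, fun h => mul_pos h.1 h.2⟩

lemma isGreatest_mul_of_nonneg {R : Type*} [MulZeroClass R] [Preorder R] [PosMulMono R]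
    [MulPosMono R] {s t : Set R} {a b : R} (ha : IsGreatest s a)
    (hb : IsGreatest t b) (ha₀ : 0 ≤ a) (ht : ∀ y ∈ t, 0 ≤ y) :
    IsGreatest (s * t) (a * b) :=
  ⟨Set.mul_mem_mul ha.1 hb.1, by
    rintro _ ⟨x, hx, y, hy, rfl⟩
    exact mul_le_mul (ha.2 hx) (hb.2 hy) (ht y hy) ha₀⟩

lemma forall_pos_imp_pos_prod_iff {S T : Type*} {p q : S → ℝ} {p₂ q₂ : T → ℝ}
    (hp : ∀ s, 0 ≤ p s) (hq : ∀ s, 0 ≤ q s) (hp₂ : ∀ t, 0 ≤ p₂ t) (hq₂ : ∀ t, 0 ≤ q₂ t)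
    (h : ∃ s, 0 < p s) (h₂ : ∃ t, 0 < p₂ t) :
    (∀ st : S × T, 0 < p st.1 * p₂ st.2 → 0 < q st.1 * q₂ st.2)
      ↔ (∀ s, 0 < p s → 0 < q s) ∧ ∀ t, 0 < p₂ t → 0 < q₂ t := by
  simp only [Prod.forall, mul_pos_iff_of_nonneg (hp _) (hp₂ _),
    mul_pos_iff_of_nonneg (hq _) (hq₂ _)]
  obtain ⟨s₀, hs₀⟩ := h
  obtain ⟨t₀, ht₀⟩ := h₂
  exact ⟨fun H => ⟨fun s hs => (H s t₀ ⟨hs, ht₀⟩).1, fun t ht => (H s₀ t ⟨hs₀, ht⟩).2⟩,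
    fun H s t hst => ⟨H.1 s hst.1, H.2 t hst.2⟩⟩

lemma IsPMF.exists_pos {S : Type*} [Fintype S] {p : S → ℝ} (hp : IsPMF p) : ∃ s, 0 < p s := by
  obtain ⟨s, -, hs⟩ := exists_ne_zero_of_sum_ne_zero (hp.2.symm ▸ one_ne_zero : ∑ s, p s ≠ 0)
  exact ⟨s, lt_of_le_of_ne (hp.1 s) (Ne.symm hs)⟩

section RatioSet

variable {S T : Type*} (p q : S → ℝ)

def ratioSet : Set ℝ := {r | ∃ s, 0 < p s ∧ r = p s / q s}

lemma ratioSet_nonneg (hp : ∀ s, 0 ≤ p s) (hq : ∀ s, 0 ≤ q s) : ∀ r ∈ ratioSet p q, 0 ≤ r := by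
  rintro _ ⟨s, -, rfl⟩
  exact div_nonneg (hp s) (hq s)

lemma isGreatest_sSup_ratioSet [Finite S] (h : ∃ s, 0 < p s) :
    IsGreatest (ratioSet p q) (sSup (ratioSet p q)) := by
  have hfin : (ratioSet p q).Finite :=
    (Set.finite_range fun s => p s / q s).subset (by rintro _ ⟨s, -, rfl⟩; exact ⟨s, rfl⟩)
  obtain ⟨s, hs⟩ := h
  exact ⟨Set.Nonempty.csSup_mem ⟨_, s, hs, rfl⟩ hfin, fun _ hr => le_csSup hfin.bddAbove hr⟩

lemma sSup_ratioSet_pos [Finite S] (h : ∃ s, 0 < p s ∧ 0 < q s) : 0 < sSup (ratioSet p q) := by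
  obtain ⟨s, hps, hqs⟩ := h
  exact (div_pos hps hqs).trans_le ((isGreatest_sSup_ratioSet p q ⟨s, hps⟩).2 ⟨s, hps, rfl⟩)

lemma ratioSet_comp_equiv (e : T ≃ S) : ratioSet (p ∘ e) (q ∘ e) = ratioSet p q := by
  ext r
  exact e.exists_congr_right (q := fun s => 0 < p s ∧ r = p s / q s)

variable {p q} (p₂ q₂ : T → ℝ)

lemma ratioSet_prod (hp : ∀ s, 0 ≤ p s) (hp₂ : ∀ t, 0 ≤ p₂ t) :
    ratioSet (fun st : S × T => p st.1 * p₂ st.2) (fun st => q st.1 * q₂ st.2)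
      = ratioSet p q * ratioSet p₂ q₂ := by
  ext r
  simp only [ratioSet, Set.mem_mul, Set.mem_ofPred_eq, Prod.exists,
    mul_pos_iff_of_nonneg (hp _) (hp₂ _), mul_div_mul_comm]
  constructor
  · rintro ⟨s, t, ⟨hs, ht⟩, rfl⟩
    exact ⟨_, ⟨s, hs, rfl⟩, _, ⟨t, ht, rfl⟩, rfl⟩
  · rintro ⟨_, ⟨s, hs, rfl⟩, _, ⟨t, ht, rfl⟩, rfl⟩
    exact ⟨s, t, ⟨hs, ht⟩, rfl⟩

lemma sSup_ratioSet_prod [Finite S] [Finite T] (hp : ∀ s, 0 ≤ p s) (hq : ∀ s, 0 ≤ q s)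
    (hp₂ : ∀ t, 0 ≤ p₂ t) (hq₂ : ∀ t, 0 ≤ q₂ t) (h : ∃ s, 0 < p s) (h₂ : ∃ t, 0 < p₂ t) :
    sSup (ratioSet (fun st : S × T => p st.1 * p₂ st.2) (fun st => q st.1 * q₂ st.2))
      = sSup (ratioSet p q) * sSup (ratioSet p₂ q₂) := by
  have hG := isGreatest_sSup_ratioSet p q h
  rw [ratioSet_prod p₂ q₂ hp hp₂]
  exact (isGreatest_mul_of_nonneg hG (isGreatest_sSup_ratioSet p₂ q₂ h₂)
    (ratioSet_nonneg p q hp hq _ hG.1) (ratioSet_nonneg p₂ q₂ hp₂ hq₂)).csSup_eq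

end RatioSet

section Renyi

variable {S T : Type*} [Fintype S] [Fintype T]

noncomputable def renyiSum (a : ℝ) (p q : S → ℝ) : ℝ :=
  ∑ s ∈ univ.filter (fun s => 0 < p s), p s ^ a * q s ^ (1 - a)

lemma renyiSum_comp_equiv (a : ℝ) (p q : T → ℝ) (e : S ≃ T) :
    renyiSum a (p ∘ e) (q ∘ e) = renyiSum a p q := by
  rw [renyiSum, renyiSum, sum_filter, sum_filter]
  exact e.sum_comp fun t => if 0 < p t then p t ^ a * q t ^ (1 - a) else 0

lemma renyiSum_pos (a : ℝ) {p q : S → ℝ} (hp : ∀ s, 0 ≤ p s) (hq : ∀ s, 0 ≤ q s)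
    (h : ∃ s, 0 < p s ∧ 0 < q s) : 0 < renyiSum a p q := by
  obtain ⟨s, hps, hqs⟩ := h
  exact sum_pos' (fun t _ => mul_nonneg (Real.rpow_nonneg (hp t) a) (Real.rpow_nonneg (hq t) _))
    ⟨s, by simpa using hps, mul_pos (Real.rpow_pos_of_pos hps a) (Real.rpow_pos_of_pos hqs _)⟩

lemma renyiSum_prod (a : ℝ) {p q : S → ℝ} {p₂ q₂ : T → ℝ}
    (hp : ∀ s, 0 ≤ p s) (hq : ∀ s, 0 ≤ q s) (hp₂ : ∀ t, 0 ≤ p₂ t) (hq₂ : ∀ t, 0 ≤ q₂ t) :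
    renyiSum a (fun st : S × T => p st.1 * p₂ st.2) (fun st => q st.1 * q₂ st.2)
      = renyiSum a p q * renyiSum a p₂ q₂ := by
  have hsupp : univ.filter (fun st : S × T => 0 < p st.1 * p₂ st.2)
      = univ.filter (fun s => 0 < p s) ×ˢ univ.filter (fun t => 0 < p₂ t) := by
    ext st
    simp [mul_pos_iff_of_nonneg (hp st.1) (hp₂ st.2)]
  rw [renyiSum, renyiSum, renyiSum, hsupp, sum_product, sum_mul_sum]
  refine sum_congr rfl fun s _ => sum_congr rfl fun t _ => ?_
  rw [Real.mul_rpow (hp _) (hp₂ _), Real.mul_rpow (hq _) (hq₂ _)]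
  ring

noncomputable def renyiReal (α : ENNReal) (p q : S → ℝ) : ℝ :=
  if α = ⊤ then Real.log (sSup (ratioSet p q))
  else (α.toReal - 1)⁻¹ * Real.log (renyiSum α.toReal p q)

lemma renyiD_eq_ite (α : ENNReal) (p q : S → ℝ) :
    renyiD α p q = if (α = ⊤ ∨ 1 < α) ∧ ¬ ∀ s, 0 < p s → 0 < q s then ⊤
      else (renyiReal α p q : EReal) := by
  unfold renyiD renyiReal renyiSum ratioSet
  by_cases hα : α = ⊤
  · simp only [hα, true_or, true_and, if_true]
    split_ifs <;> rfl
  · simp only [hα, false_or, if_false]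

lemma renyiD_comp_equiv (α : ENNReal) (p q : T → ℝ) (e : S ≃ T) :
    renyiD α (p ∘ e) (q ∘ e) = renyiD α p q := by
  simp only [renyiD_eq_ite, renyiReal, ratioSet_comp_equiv, renyiSum_comp_equiv,
    Function.comp_apply, e.forall_congr_right (q := fun t => 0 < p t → 0 < q t)]

variable {p q : S → ℝ} {p₂ q₂ : T → ℝ}

lemma renyiReal_prod (α : ENNReal)
    (hp : ∀ s, 0 ≤ p s) (hq : ∀ s, 0 ≤ q s) (hp₂ : ∀ t, 0 ≤ p₂ t) (hq₂ : ∀ t, 0 ≤ q₂ t)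
    (h : ∃ s, 0 < p s ∧ 0 < q s) (h₂ : ∃ t, 0 < p₂ t ∧ 0 < q₂ t) :
    renyiReal α (fun st : S × T => p st.1 * p₂ st.2) (fun st => q st.1 * q₂ st.2)
      = renyiReal α p q + renyiReal α p₂ q₂ := by
  unfold renyiReal
  split_ifs
  · rw [sSup_ratioSet_prod p₂ q₂ hp hq hp₂ hq₂ (h.imp fun _ => And.left)
      (h₂.imp fun _ => And.left), Real.log_mul (sSup_ratioSet_pos p q h).ne'
      (sSup_ratioSet_pos p₂ q₂ h₂).ne']
  · rw [renyiSum_prod _ hp hq hp₂ hq₂, Real.log_mul (renyiSum_pos _ hp hq h).ne'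
      (renyiSum_pos _ hp₂ hq₂ h₂).ne', mul_add]

end Renyi

lemma EReal.ite_top_add_ite_top {P Q : Prop} [Decidable P] [Decidable Q] (x y : ℝ) :
    ((if P then ⊤ else (x : EReal)) + if Q then ⊤ else (y : EReal))
      = if P ∨ Q then ⊤ else ((x + y : ℝ) : EReal) := by
  split_ifs <;> simp_all

lemma renyiD_prod {S T : Type*} [Fintype S] [Fintype T] (α : ENNReal)
    {p q : S → ℝ} {p₂ q₂ : T → ℝ}
    (hp : ∀ s, 0 ≤ p s) (hq : ∀ s, 0 ≤ q s) (hp₂ : ∀ t, 0 ≤ p₂ t) (hq₂ : ∀ t, 0 ≤ q₂ t)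
    (h : ∃ s, 0 < p s ∧ 0 < q s) (h₂ : ∃ t, 0 < p₂ t ∧ 0 < q₂ t) :
    renyiD α (fun st : S × T => p st.1 * p₂ st.2) (fun st => q st.1 * q₂ st.2)
      = renyiD α p q + renyiD α p₂ q₂ := by
  rw [renyiD_eq_ite, renyiD_eq_ite, renyiD_eq_ite, EReal.ite_top_add_ite_top,
    renyiReal_prod α hp hq hp₂ hq₂ h h₂]
  simp only [forall_pos_imp_pos_prod_iff hp hq hp₂ hq₂ (h.imp fun _ => And.left)
    (h₂.imp fun _ => And.left), not_and_or, and_or_left]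

theorem Jalpha_additive_general {X₁ Y₁ X₂ Y₂ : Type*} [Fintype X₁] [Fintype Y₁]
    [Fintype X₂] [Fintype Y₂]
    (p₁ : X₁ × Y₁ → ℝ) (hp₁ : IsPMF p₁) (p₂ : X₂ × Y₂ → ℝ) (hp₂ : IsPMF p₂)
    (α : ENNReal) :
    Jalpha α (fun t : (X₁ × X₂) × (Y₁ × Y₂) => p₁ (t.1.1, t.2.1) * p₂ (t.1.2, t.2.2))
      = Jalpha α p₁ + Jalpha α p₂ := by
  obtain ⟨u₁, hu₁⟩ := hp₁.exists_pos
  obtain ⟨u₂, hu₂⟩ := hp₂.exists_pos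
  let f := Equiv.prodProdProdComm X₁ X₂ Y₁ Y₂
  let e := (f.prodCongr f).trans (Equiv.prodProdProdComm _ _ _ _)
  rw [Jalpha, Jalpha, Jalpha, ← renyiD_prod α ?_ ?_ ?_ ?_ ?_ ?_, ← renyiD_comp_equiv α _ _ e]
  · congr 1 <;> funext t <;> simp only [e, f, Function.comp_apply, Equiv.trans_apply,
      Equiv.prodCongr_apply, Equiv.prodProdProdComm_apply, Prod.map] <;> ring
  exacts [fun _ => mul_nonneg (hp₁.1 _) (hp₁.1 _), fun _ => mul_nonneg (hp₁.1 _) (hp₁.1 _),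
    fun _ => mul_nonneg (hp₂.1 _) (hp₂.1 _), fun _ => mul_nonneg (hp₂.1 _) (hp₂.1 _),
    ⟨(u₁, u₁), mul_pos hu₁ hu₁, mul_pos hu₁ hu₁⟩, ⟨(u₂, u₂), mul_pos hu₂ hu₂, mul_pos hu₂ hu₂⟩]

/-- additivity: if `(X₁,Y₁)` and `(X₂,Y₂)` are independent, i.e. the
joint pmf is `P((x₁,x₂),(y₁,y₂)) = p₁(x₁,y₁)·p₂(x₂,y₂)`, then
`J_α(P) = J_α(p₁) + J_α(p₂)` for every `α ∈ (0,1) ∪ (1,∞]` (addition in `(-∞,∞]`). -/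
theorem Jalpha_additive {X₁ Y₁ X₂ Y₂ : Type*} [Fintype X₁] [Fintype Y₁]
    [Fintype X₂] [Fintype Y₂]
    (p₁ : X₁ × Y₁ → ℝ) (hp₁ : IsPMF p₁) (p₂ : X₂ × Y₂ → ℝ) (hp₂ : IsPMF p₂)
    (α : ENNReal) (hα : 0 < α ∧ α ≠ 1) :
    Jalpha α (fun t : (X₁ × X₂) × (Y₁ × Y₂) => p₁ (t.1.1, t.2.1) * p₂ (t.1.2, t.2.2))
      = Jalpha α p₁ + Jalpha α p₂ :=
  Jalpha_additive_general p₁ hp₁ p₂ hp₂ α
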